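/- arXiv:2208.02399 — 3 statements merged into one kernel-verified Lean document; each statement's English description precedes it below -/
import Mathlib

section
/- Let U ⊆ ℝⁿ, n ≥ 2, be a strictly starlike domain and define R : S^{n−1} → (0, +∞] by R(θ) = sup{ρ ≥ 0 : ρθ ∈ U}. Then R is continuous, where [0, +∞] carries the order topology. -/
open Metric Set Filter Topology MeasureTheory
open scoped NNReal ENNReal

noncomputable section

abbrev Euc (k : ℕ) := EuclideanSpace ℝ (Fin k)

/-- Second directional derivative of `u` at `x`, twice in the direction `v`. -/
def DirDeriv2 {X : Type*} [NormedAddCommGroup X] [NormedSpace ℝ X]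
    (u : X → ℝ) (v : X) (x : X) : ℝ :=
  fderiv ℝ (fun y => fderiv ℝ u y v) x v

/-- Mixed second derivative of `u` at `x` in the directions `v`, `w`. -/
def MixedDeriv2 {X : Type*} [NormedAddCommGroup X] [NormedSpace ℝ X]
    (u : X → ℝ) (v w : X) (x : X) : ℝ :=
  fderiv ℝ (fun y => fderiv ℝ u y w) x v

/-- The Euclidean Laplacian. -/
def EucLap {k : ℕ} (u : Euc k → ℝ) (x : Euc k) : ℝ :=
  ∑ i, DirDeriv2 u (EuclideanSpace.single i 1) x

/-- `u` is (classically) harmonic on the open set `U` : it is `C²` and `Δ u = 0` on `U`. -/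
def HarmOn {k : ℕ} (u : Euc k → ℝ) (U : Set (Euc k)) : Prop :=
  IsOpen U ∧ ContDiffOn ℝ 2 u U ∧ ∀ x ∈ U, EucLap u x = 0

/-- `u : Euc k → EReal` is superharmonic on the open set `W`: it is lower semicontinuous,
`> -∞`, not `≡ +∞` on any component, and dominates on every ball every harmonic function
which it dominates on the boundary sphere (the classical comparison characterization of
distributional `Δ u ≤ 0`). -/
def SuperharmOn {k : ℕ} (u : Euc k → EReal) (W : Set (Euc k)) : Prop :=
  IsOpen W ∧ LowerSemicontinuousOn u W ∧ (∀ x ∈ W, u x ≠ ⊥) ∧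
    (∀ x ∈ W, ∃ y ∈ connectedComponentIn W x, u y ≠ ⊤) ∧
    ∀ (x : Euc k) (r : ℝ), 0 < r → closedBall x r ⊆ W →
      ∀ h : Euc k → ℝ, ContinuousOn h (closedBall x r) → HarmOn h (ball x r) →
        (∀ y ∈ sphere x r, (h y : EReal) ≤ u y) →
        ∀ y ∈ ball x r, (h y : EReal) ≤ u y

/-- A set `A ⊆ ℝᵏ` is polar: some superharmonic function on an open `W ⊇ A`
is `+∞` on all of `A`. -/
def EucPolar {k : ℕ} (A : Set (Euc k)) : Prop :=
  ∃ (W : Set (Euc k)) (u : Euc k → EReal),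
    IsOpen W ∧ A ⊆ W ∧ SuperharmOn u W ∧ ∀ x ∈ A, u x = ⊤

/-- A set `A` is thin at `y`. -/
def EucThinAt {k : ℕ} (A : Set (Euc k)) (y : Euc k) : Prop :=
  y ∉ closure (A \ {y}) ∨
    ∃ W : Set (Euc k), IsOpen W ∧ y ∈ W ∧
      ∃ u : Euc k → EReal, SuperharmOn u W ∧ u y < Filter.liminf u (𝓝[A \ {y}] y)

/-- A subset `A` of the unit sphere `S^{k-1}` is (spherically) polar, i.e. polar for the
intrinsic potential theory of the round sphere; equivalently (Fuglede), the radial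
cone over `A` is polar in `ℝᵏ`. -/
def SphPolar {k : ℕ} (A : Set (Euc k)) : Prop :=
  EucPolar {x : Euc k | x ≠ 0 ∧ ‖x‖⁻¹ • x ∈ A}

/-- The radial function of a set `U`, with values in `[0,+∞]`. -/
def radialE {k : ℕ} (U : Set (Euc k)) (θ : Euc k) : EReal :=
  sSup ((fun ρ : ℝ => (ρ : EReal)) '' {ρ : ℝ | 0 ≤ ρ ∧ ρ • θ ∈ U})

/-- `U` is a strictly starlike domain (with respect to the origin). -/
def IsStrictStar {k : ℕ} (U : Set (Euc k)) : Prop :=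
  IsOpen U ∧ IsConnected U ∧ ∀ p ∈ closure U, ∀ t : ℝ, 0 ≤ t → t < 1 → t • p ∈ U

/-- The filter of real numbers `ρ ↑ c` (for an extended real `c`). -/
def upFilter (c : EReal) : Filter ℝ :=
  Filter.comap (fun ρ : ℝ => (ρ : EReal)) (𝓝[<] c)

/-- The filter of real numbers `ρ ↓ c` (for an extended real `c`). -/
def downFilter (c : EReal) : Filter ℝ :=
  Filter.comap (fun ρ : ℝ => (ρ : EReal)) (𝓝[>] c)

/-- The filter describing the radial approach `ρ ↗ R(θ)` in a starlike domain. -/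
def radialFilter {k : ℕ} (U : Set (Euc k)) (θ : Euc k) : Filter ℝ :=
  upFilter (radialE U θ) ⊓ 𝓟 (Ici (0:ℝ))

/-- A second order partial differential operator
`L = ∑ aᵢⱼ ∂²/∂xᵢ∂xⱼ + ∑ bᵢ ∂/∂xᵢ + c` on a domain `Ω ⊆ ℝᵏ`, with
`aᵢⱼ = aⱼᵢ ∈ C^{2,1}`, `bᵢ ∈ C^{1,1}`, `c ∈ C^{0,1}`, `c ≤ 0`, and `(aᵢⱼ)`
positive definite on `Ω` (so `L` is elliptic). -/
structure EllipticOp (k : ℕ) (Ω : Set (Euc k)) where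
  a : Fin k → Fin k → Euc k → ℝ
  b : Fin k → Euc k → ℝ
  c : Euc k → ℝ
  symm : ∀ i j x, a i j x = a j i x
  a_C2 : ∀ i j, ContDiffOn ℝ 2 (a i j) Ω
  a_lip : ∀ i j, ∀ x ∈ Ω, ∃ t ∈ 𝓝 x, ∃ K : ℝ≥0,
    LipschitzOnWith K (iteratedFDerivWithin ℝ 2 (a i j) Ω) (t ∩ Ω)
  b_C1 : ∀ i, ContDiffOn ℝ 1 (b i) Ω
  b_lip : ∀ i, ∀ x ∈ Ω, ∃ t ∈ 𝓝 x, ∃ K : ℝ≥0,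
    LipschitzOnWith K (iteratedFDerivWithin ℝ 1 (b i) Ω) (t ∩ Ω)
  c_C0 : ContinuousOn c Ω
  c_lip : ∀ x ∈ Ω, ∃ t ∈ 𝓝 x, ∃ K : ℝ≥0, LipschitzOnWith K c (t ∩ Ω)
  c_nonpos : ∀ x ∈ Ω, c x ≤ 0
  posdef : ∀ x ∈ Ω, ∀ v : Fin k → ℝ, v ≠ 0 → 0 < ∑ i, ∑ j, a i j x * v i * v j

/-- The action of the operator `L` on a function `u`. -/
def EllipticOp.app {k : ℕ} {Ω : Set (Euc k)} (L : EllipticOp k Ω)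
    (u : Euc k → ℝ) (x : Euc k) : ℝ :=
  (∑ i, ∑ j, L.a i j x *
      MixedDeriv2 u (EuclideanSpace.single i 1) (EuclideanSpace.single j 1) x) +
    (∑ i, L.b i x * fderiv ℝ u x (EuclideanSpace.single i 1)) + L.c x * u x

/-- `u` is `L`-harmonic on the open set `U ⊆ Ω` : `u ∈ C²(U)` and `L u = 0` on `U`. -/
def LHarmOn {k : ℕ} {Ω : Set (Euc k)} (L : EllipticOp k Ω)
    (u : Euc k → ℝ) (U : Set (Euc k)) : Prop :=
  U ⊆ Ω ∧ IsOpen U ∧ ContDiffOn ℝ 2 u U ∧ ∀ x ∈ U, L.app u x = 0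

/-- `u : Euc k → EReal` is `L`-superharmonic on the open set `W ⊆ Ω`
(comparison characterization of the lower semicontinuous distributional
solutions of `L u ≤ 0`). -/
def LSuperharmOn {k : ℕ} {Ω : Set (Euc k)} (L : EllipticOp k Ω)
    (u : Euc k → EReal) (W : Set (Euc k)) : Prop :=
  W ⊆ Ω ∧ IsOpen W ∧ LowerSemicontinuousOn u W ∧ (∀ x ∈ W, u x ≠ ⊥) ∧
    (∀ x ∈ W, ∃ y ∈ connectedComponentIn W x, u y ≠ ⊤) ∧
    ∀ (x : Euc k) (r : ℝ), 0 < r → closedBall x r ⊆ W →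
      ∀ h : Euc k → ℝ, ContinuousOn h (closedBall x r) → LHarmOn L h (ball x r) →
        (∀ y ∈ sphere x r, (h y : EReal) ≤ u y) →
        ∀ y ∈ ball x r, (h y : EReal) ≤ u y

/-- There exists an `L`-superharmonic function `> 0` on `D` which is not `L`-harmonic. -/
def HasLPotentialOn {k : ℕ} {Ω : Set (Euc k)} (L : EllipticOp k Ω) (D : Set (Euc k)) : Prop :=
  ∃ u : Euc k → EReal, LSuperharmOn L u D ∧ (∀ x ∈ D, 0 < u x) ∧
    ¬ ∃ v : Euc k → ℝ, LHarmOn L v D ∧ ∀ x ∈ D, u x = (v x : EReal)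

/-- `K` is an `L`-Mergelyan set in the domain `D`. -/
def LMergelyan {k : ℕ} {Ω : Set (Euc k)} (L : EllipticOp k Ω) (D K : Set (Euc k)) : Prop :=
  IsCompact K ∧ K ⊆ D ∧
    ∀ u : Euc k → ℝ, ContinuousOn u K → LHarmOn L u (interior K) →
      ∀ ε : ℝ, 0 < ε → ∃ v : Euc k → ℝ, LHarmOn L v D ∧ ∀ x ∈ K, |v x - u x| < ε

/-- `S` is an `L`-Carleman set in the domain `D` (`S` is closed in `D`). -/
def LCarleman {k : ℕ} {Ω : Set (Euc k)} (L : EllipticOp k Ω) (D S : Set (Euc k)) : Prop :=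
  S ⊆ D ∧ closure S ∩ D ⊆ S ∧
    ∀ u : Euc k → ℝ, ContinuousOn u S → LHarmOn L u (interior S) →
      ∀ ε : Euc k → ℝ, ContinuousOn ε S → (∀ x ∈ S, ε x ∈ Ioc (0:ℝ) 1) →
        ∃ v : Euc k → ℝ, LHarmOn L v D ∧ ∀ x ∈ S, |v x - u x| < ε x

/-- `C` is a chaplet in the domain `D`: the union of a locally finite (in `D`) family of
pairwise disjoint, connected, compact `L`-Mergelyan sets contained in `D`, whose
complements in `ℝᵏ` are connected. -/
def LChaplet {k : ℕ} {Ω : Set (Euc k)} (L : EllipticOp k Ω) (D C : Set (Euc k)) : Prop :=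
  ∃ 𝒬 : Set (Set (Euc k)),
    C = ⋃₀ 𝒬 ∧
    (∀ x ∈ D, ∃ t ∈ 𝓝 x, {q ∈ 𝒬 | (q ∩ t).Nonempty}.Finite) ∧
    (𝒬.Pairwise Disjoint) ∧
    ∀ q ∈ 𝒬, IsCompact q ∧ IsConnected q ∧ q ⊆ D ∧ IsConnected qᶜ ∧ LMergelyan L D q

/-- The union of `F` with all of its holes (the bounded components of `D \ F`),
relative to the domain `D`. -/
def hullIn {k : ℕ} (D F : Set (Euc k)) : Set (Euc k) :=
  F ∪ {x | x ∈ D \ F ∧ IsCompact (closure (connectedComponentIn (D \ F) x)) ∧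
        closure (connectedComponentIn (D \ F) x) ⊆ D}


/-!
Since `U` is open, `R` is a supremum of the lower semicontinuous functions
`θ ↦ ρ · 𝟙[ρθ ∈ U]`. For upper semicontinuity, strict starlikeness turns `R(θ) < ρ₁ < ρ` into
`ρθ ∉ closure U`, which is an open condition in `θ` and forces `R ≤ ρ` nearby.
-/

variable {k : ℕ} {U : Set (Euc k)} {θ : Euc k}

theorem IsStrictStar.zero_mem (hU : IsStrictStar U) : (0 : Euc k) ∈ U := by
  obtain ⟨p, hp⟩ := hU.2.1.nonempty
  simpa using hU.2.2 p (subset_closure hp) 0 le_rfl one_pos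

theorem IsStrictStar.smul_mem_of_smul_mem_closure (hU : IsStrictStar U) {ρ σ : ℝ}
    (hρ : ρ • θ ∈ closure U) (hσ : 0 ≤ σ) (hσρ : σ < ρ) : σ • θ ∈ U := by
  have hρ₀ : 0 < ρ := hσ.trans_lt hσρ
  simpa [smul_smul, div_mul_cancel₀ σ hρ₀.ne'] using
    hU.2.2 _ hρ (σ / ρ) (div_nonneg hσ hρ₀.le) ((div_lt_one hρ₀).2 hσρ)

theorem le_radialE {ρ : ℝ} (hρ : 0 ≤ ρ) (h : ρ • θ ∈ U) : (ρ : EReal) ≤ radialE U θ :=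
  le_sSup ⟨ρ, ⟨hρ, h⟩, rfl⟩

theorem IsStrictStar.radialE_nonneg (hU : IsStrictStar U) : 0 ≤ radialE U θ := by
  simpa using le_radialE le_rfl (by simpa using hU.zero_mem)

theorem IsStrictStar.radialE_le_of_smul_notMem (hU : IsStrictStar U) {ρ : ℝ} (hρ : 0 ≤ ρ)
    (h : ρ • θ ∉ U) : radialE U θ ≤ ρ := by
  refine sSup_le ?_
  rintro _ ⟨σ, ⟨-, hσU⟩, rfl⟩
  by_contra! hρσ
  exact h (hU.smul_mem_of_smul_mem_closure (subset_closure hσU) hρ (mod_cast hρσ))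

theorem lowerSemicontinuous_radialE (hU : IsOpen U) : LowerSemicontinuous (radialE U) := by
  intro θ a ha
  obtain ⟨_, ⟨σ, ⟨hσ, hσU⟩, rfl⟩, haσ⟩ := lt_sSup_iff.1 ha
  filter_upwards [(continuous_const_smul σ).continuousAt.preimage_mem_nhds (hU.mem_nhds hσU)]
    with θ' hθ'
  exact haσ.trans_le (le_radialE hσ hθ')

theorem IsStrictStar.upperSemicontinuous_radialE (hU : IsStrictStar U) :
    UpperSemicontinuous (radialE U) := by
  intro θ c hc
  obtain ⟨ρ₁, hθρ₁, hρ₁c⟩ := EReal.lt_iff_exists_real_btwn.1 hc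
  obtain ⟨ρ, hρ₁ρ, hρc⟩ := EReal.lt_iff_exists_real_btwn.1 hρ₁c
  have hρ₁ : 0 ≤ ρ₁ := mod_cast hU.radialE_nonneg.trans hθρ₁.le
  have hρθ : ρ • θ ∉ closure U := fun h ↦ (le_radialE hρ₁
    (hU.smul_mem_of_smul_mem_closure h hρ₁ (mod_cast hρ₁ρ))).not_gt hθρ₁
  filter_upwards [(continuous_const_smul ρ).continuousAt.preimage_mem_nhds
    (isClosed_closure.isOpen_compl.mem_nhds hρθ)] with θ' hθ'
  exact (hU.radialE_le_of_smul_notMem (hρ₁.trans (mod_cast hρ₁ρ.le))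
    fun h ↦ hθ' (subset_closure h)).trans_lt hρc

theorem IsStrictStar.continuous_radialE (hU : IsStrictStar U) : Continuous (radialE U) :=
  continuous_iff_lower_upperSemicontinuous.2
    ⟨lowerSemicontinuous_radialE hU.1, hU.upperSemicontinuous_radialE⟩

theorem strictStar_radial_continuous_general
    (n : ℕ) (U : Set (Euc n)) (hU : IsStrictStar U) :
    Continuous (fun θ : ↥(sphere (0 : Euc n) 1) => radialE U (θ : Euc n)) :=
  hU.continuous_radialE.comp continuous_subtype_val

/-- The radial function `R : S^{n-1} → (0, +∞]` of a strictly starlike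
domain is continuous (with the order topology on `[0, +∞]`, realized in `EReal`). -/
theorem strictStar_radial_continuous
    (n : ℕ) (hn : 2 ≤ n) (U : Set (Euc n)) (hU : IsStrictStar U) :
    Continuous (fun θ : ↥(sphere (0 : Euc n) 1) => radialE U (θ : Euc n)) :=
  strictStar_radial_continuous_general n U hU

end
end

section
/- Let U be an open subset of ℝⁿ, let X be a smooth closed hypersurface in U or a smoothly bordered domain in U, and let x be a point of the boundary ∂X. Then U∖X is not thin at x. -/
/-!
Near a boundary point `x`, both kinds of `X` are cut out by a `C²` function `f` with `f x = 0`,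
`∇f(x) ≠ 0` and `f > 0` only off `X`; a second-order Taylor bound then puts a ball
`B = B(x + r e, r)`, tangent to the level set at `x`, inside `U \ X`.

Such a ball is never thin at `x`. If `u` is superharmonic near `x` with `u x = a < c < u` on `B`
near `x`, compare `u` on a small sphere `S(x, s)` with the harmonic quadratic
`a + ε (1 + 4n ω + 4 (n ω² - ‖y - x‖² / s²))`, `ω = ⟪e, y - x⟫ / s`. On the part of `S` where
`ω ≤ 1 / (4 (n + 1))` it is `≤ a - ε`, which lower semicontinuity of `u` beats; the rest of `S`
lies in `B`, where it is `≤ c`. The comparison principle then gives `a + ε ≤ u x = a`.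
-/

open Metric Set Filter Topology MeasureTheory
open scoped NNReal ENNReal

noncomputable section

/-- `X` is a smooth closed hypersurface in the open set `U`: it is closed in `U` and is
locally the regular zero set of a smooth function. -/
def IsSmoothClosedHypersurfaceIn {k : ℕ} (X U : Set (Euc k)) : Prop :=
  X ⊆ U ∧ closure X ∩ U ⊆ X ∧
    ∀ x ∈ X, ∃ (V : Set (Euc k)) (f : Euc k → ℝ), IsOpen V ∧ x ∈ V ∧ V ⊆ U ∧
      ContDiff ℝ (⊤ : ℕ∞) f ∧ (∀ y ∈ V, (y ∈ X ↔ f y = 0)) ∧ ∀ y ∈ V, fderiv ℝ f y ≠ 0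

/-- `X` is a smoothly bordered domain in the open set `U`: it is closed in `U`, is the
closure (in `U`) of its connected interior, and near each of its boundary points in `U`
it is a smooth sublevel set `{f ≤ 0}` of a smooth function with nonvanishing gradient. -/
def IsSmoothlyBorderedDomainIn {k : ℕ} (X U : Set (Euc k)) : Prop :=
  X ⊆ U ∧ closure X ∩ U ⊆ X ∧ IsConnected (interior X) ∧ X ⊆ closure (interior X) ∧
    ∀ x ∈ frontier X ∩ U, ∃ (V : Set (Euc k)) (f : Euc k → ℝ), IsOpen V ∧ x ∈ V ∧ V ⊆ U ∧
      ContDiff ℝ (⊤ : ℕ∞) f ∧ (∀ y ∈ V, (y ∈ X ↔ f y ≤ 0)) ∧ ∀ y ∈ V, fderiv ℝ f y ≠ 0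

open scoped RealInnerProductSpace

section Harmonic

variable {n : ℕ}

def zonalQuadratic (x e : Euc n) (a b c : ℝ) (y : Euc n) : ℝ :=
  a + b * ⟪e, y - x⟫ + c * (n * ⟪e, y - x⟫ ^ 2 - ‖y - x‖ ^ 2)

lemma hasFDerivAt_inner_sub {E : Type*} [NormedAddCommGroup E] [InnerProductSpace ℝ E]
    (w x y : E) : HasFDerivAt (fun z => ⟪w, z - x⟫) (innerSL ℝ w) y :=
  ((innerSL ℝ w).hasFDerivAt).comp y ((hasFDerivAt_id y).sub_const x)

lemma fderiv_zonalQuadratic_apply (x e : Euc n) (a b c : ℝ) (y v : Euc n) :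
    fderiv ℝ (zonalQuadratic x e a b c) y v =
      b * ⟪e, v⟫ + c * (2 * n * ⟪e, v⟫ * ⟪e, y - x⟫ - 2 * ⟪v, y - x⟫) := by
  have hd := ((hasFDerivAt_inner_sub e x y).const_mul b).const_add a |>.add
    ((((hasFDerivAt_inner_sub e x y).pow 2).const_mul (n : ℝ)).sub
      ((hasFDerivAt_id y).sub_const x).norm_sq |>.const_mul c)
  rw [HasFDerivAt.fderiv (f := zonalQuadratic x e a b c) hd]
  simp only [add_apply, sub_apply, smul_apply, ContinuousLinearMap.comp_apply, innerSL_apply_apply,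
    ContinuousLinearMap.id_apply, id_eq, smul_eq_mul, nsmul_eq_mul,
    real_inner_comm v]
  ring

lemma dirDeriv2_zonalQuadratic (x e : Euc n) (a b c : ℝ) (y v : Euc n) :
    DirDeriv2 (zonalQuadratic x e a b c) v y = 2 * c * (n * ⟪e, v⟫ ^ 2 - ‖v‖ ^ 2) := by
  have hd := (((hasFDerivAt_inner_sub e x y).const_mul (2 * c * n * ⟪e, v⟫)).const_add
    (b * ⟪e, v⟫)).sub ((hasFDerivAt_inner_sub v x y).const_mul (2 * c))
  have hfun : (fun z => fderiv ℝ (zonalQuadratic x e a b c) z v) =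
      fun z => b * ⟪e, v⟫ + 2 * c * n * ⟪e, v⟫ * ⟪e, z - x⟫ - 2 * c * ⟪v, z - x⟫ :=
    funext fun z => by rw [fderiv_zonalQuadratic_apply]; ring
  rw [DirDeriv2, hfun, HasFDerivAt.fderiv (f := fun z => _ + _ - _) hd]
  simp only [sub_apply, smul_apply, coe_innerSL_apply, smul_eq_mul, inner_self_eq_norm_sq_to_K,
    Real.ringHom_apply]
  ring

lemma eucLap_zonalQuadratic {x e : Euc n} (he : ‖e‖ = 1) (a b c : ℝ) (y : Euc n) :
    EucLap (zonalQuadratic x e a b c) y = 0 := by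
  have hsum : ∑ i, e i ^ 2 = 1 := by rw [← EuclideanSpace.real_norm_sq_eq, he, one_pow]
  simp only [EucLap, dirDeriv2_zonalQuadratic, EuclideanSpace.inner_single_right,
    PiLp.norm_single]
  simp [← Finset.mul_sum, Finset.sum_sub_distrib, hsum]

lemma contDiff_zonalQuadratic (x e : Euc n) (a b c : ℝ) :
    ContDiff ℝ 2 (zonalQuadratic x e a b c) := by
  have hw : ContDiff ℝ 2 (fun y : Euc n => ⟪e, y - x⟫) :=
    contDiff_const.inner ℝ (contDiff_id.sub contDiff_const)
  have hq : ContDiff ℝ 2 (fun y : Euc n => ‖y - x‖ ^ 2) :=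
    (contDiff_norm_sq ℝ).comp (contDiff_id.sub contDiff_const)
  unfold zonalQuadratic
  fun_prop

lemma harmOn_zonalQuadratic {x e : Euc n} (he : ‖e‖ = 1) (a b c : ℝ) {U : Set (Euc n)}
    (hU : IsOpen U) : HarmOn (zonalQuadratic x e a b c) U :=
  ⟨hU, (contDiff_zonalQuadratic x e a b c).contDiffOn,
    fun y _ => eucLap_zonalQuadratic he a b c y⟩

end Harmonic

section TangentBall

variable {E : Type*} [NormedAddCommGroup E] [InnerProductSpace ℝ E] {x e y : E} {r : ℝ}

lemma dist_add_smul_self (he : ‖e‖ = 1) (hr : 0 ≤ r) : dist (x + r • e) x = r := by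
  rw [dist_self_add_left, norm_smul, he, mul_one, Real.norm_of_nonneg hr]

lemma mem_ball_add_smul_iff (he : ‖e‖ = 1) (hr : 0 ≤ r) :
    y ∈ ball (x + r • e) r ↔ ‖y - x‖ ^ 2 < 2 * r * ⟪e, y - x⟫ := by
  have hsq : ‖y - (x + r • e)‖ ^ 2 = ‖y - x‖ ^ 2 - 2 * r * ⟪e, y - x⟫ + r ^ 2 := by
    rw [show y - (x + r • e) = (y - x) - r • e by abel, norm_sub_sq_real, real_inner_smul_right,
      norm_smul, he, real_inner_comm, Real.norm_of_nonneg hr]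
    ring
  rw [mem_ball_iff_norm, ← sq_lt_sq₀ (norm_nonneg _) hr, hsq]
  constructor <;> intro h <;> linarith

lemma self_mem_closure_ball_add_smul (he : ‖e‖ = 1) (hr : 0 < r) :
    x ∈ closure (ball (x + r • e) r) := by
  rw [closure_ball _ hr.ne', mem_closedBall, dist_comm, dist_add_smul_self he hr.le]

lemma self_notMem_ball_add_smul (he : ‖e‖ = 1) (hr : 0 ≤ r) : x ∉ ball (x + r • e) r := by
  rw [mem_ball, dist_comm, dist_add_smul_self he hr]
  exact lt_irrefl r

lemma ball_add_smul_subset_ball (he : ‖e‖ = 1) (hr : 0 ≤ r) :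
    ball (x + r • e) r ⊆ ball x (2 * r) :=
  ball_subset_ball' (by rw [dist_add_smul_self he hr]; linarith)

end TangentBall

lemma exists_norm_sub_sub_fderiv_le_sq {E F : Type*} [NormedAddCommGroup E] [NormedSpace ℝ E]
    [NormedAddCommGroup F] [NormedSpace ℝ F] {f : E → F} (hf : ContDiff ℝ 2 f) (x : E) :
    ∃ K ≥ 0, ∃ ρ > 0, ∀ y ∈ ball x ρ, ‖f y - f x - fderiv ℝ f x (y - x)‖ ≤ K * ‖y - x‖ ^ 2 := by
  obtain ⟨K, t, ht, hK⟩ := (hf.fderiv_right le_rfl).contDiffAt.exists_lipschitzOnWith (x := x)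
  obtain ⟨ρ, hρ, hρt⟩ := Metric.mem_nhds_iff.mp ht
  refine ⟨K, K.coe_nonneg, ρ, hρ, fun y hy => ?_⟩
  have hsub : closedBall x ‖y - x‖ ⊆ t :=
    (closedBall_subset_ball (mem_ball_iff_norm.mp hy)).trans hρt
  have hxt : x ∈ t := hsub (mem_closedBall_self (norm_nonneg _))
  have hbound : ∀ z ∈ closedBall x ‖y - x‖, ‖fderiv ℝ f z - fderiv ℝ f x‖ ≤ K * ‖y - x‖ :=
    fun z hz => (hK.norm_sub_le (hsub hz) hxt).trans
      (mul_le_mul_of_nonneg_left (mem_closedBall_iff_norm.mp hz) K.coe_nonneg)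
  calc ‖f y - f x - fderiv ℝ f x (y - x)‖ ≤ K * ‖y - x‖ * ‖y - x‖ :=
        (convex_closedBall x _).norm_image_sub_le_of_norm_fderiv_le'
          (fun z _ => (hf.differentiable two_ne_zero).differentiableAt) hbound
          (mem_closedBall_self (norm_nonneg _)) (mem_closedBall_iff_norm.mpr le_rfl)
    _ = K * ‖y - x‖ ^ 2 := by ring

lemma exists_ball_add_smul_subset_of_fderiv_ne_zero {E : Type*} [NormedAddCommGroup E]
    [InnerProductSpace ℝ E] [CompleteSpace E] {f : E → ℝ} {x : E} {A : Set E}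
    (hf : ContDiff ℝ 2 f) (hfx : f x = 0) (hf'x : fderiv ℝ f x ≠ 0)
    (hA : ∀ᶠ y in 𝓝 x, 0 < f y → y ∈ A) :
    ∃ e : E, ∃ r > 0, ‖e‖ = 1 ∧ ball (x + r • e) r ⊆ A := by
  set grad := (InnerProductSpace.toDual ℝ E).symm (fderiv ℝ f x)
  have hgrad : grad ≠ 0 := by simpa [grad] using hf'x
  set G := ‖grad‖
  have hG : 0 < G := norm_pos_iff.mpr hgrad
  set e := G⁻¹ • grad
  have he : ‖e‖ = 1 := norm_smul_inv_norm hgrad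
  have hfe : ∀ v, fderiv ℝ f x v = G * ⟪e, v⟫ := fun v => by
    rw [← InnerProductSpace.toDual_symm_apply, real_inner_smul_left,
      mul_inv_cancel_left₀ hG.ne']
  obtain ⟨K, hK, ρ, hρ, htaylor⟩ := exists_norm_sub_sub_fderiv_le_sq hf x
  obtain ⟨ρ', hρ', hρ'A⟩ := Metric.eventually_nhds_iff_ball.mp hA
  set r := min (min ρ ρ' / 2) (G / (2 * (K + 1)))
  have hr : 0 < r := lt_min (half_pos (lt_min hρ hρ')) (by positivity)
  have h2r : 2 * r ≤ min ρ ρ' := by linarith [min_le_left (min ρ ρ' / 2) (G / (2 * (K + 1)))]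
  have hrG : 2 * r * (K + 1) ≤ G := by
    have := min_le_right (min ρ ρ' / 2) (G / (2 * (K + 1)))
    rw [le_div_iff₀ (by positivity)] at this
    linarith
  refine ⟨e, r, hr, he, fun y hy => ?_⟩
  have hyx : y ∈ ball x (min ρ ρ') :=
    ball_subset_ball h2r (ball_add_smul_subset_ball he hr.le hy)
  have hne : y ≠ x := fun h => self_notMem_ball_add_smul he hr.le (h ▸ hy)
  have hinner := (mem_ball_add_smul_iff he hr.le).mp hy
  have hpos : 0 < ‖y - x‖ := norm_pos_iff.mpr (sub_ne_zero.mpr hne)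
  have hlow : G * ⟪e, y - x⟫ - K * ‖y - x‖ ^ 2 ≤ f y := by
    have := htaylor y (ball_subset_ball (min_le_left _ _) hyx)
    rw [hfx, sub_zero, hfe, Real.norm_eq_abs] at this
    linarith [neg_abs_le (f y - G * ⟪e, y - x⟫)]
  have hw : 0 < ⟪e, y - x⟫ :=
    pos_of_mul_pos_right ((pow_pos hpos 2).trans hinner) (by positivity)
  refine hρ'A y (ball_subset_ball (min_le_right _ _) hyx) ?_
  nlinarith [pow_pos hpos 2, mul_le_mul_of_nonneg_left hrG hw.le]

section Barrier

variable {n : ℕ}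

def tangentBarrier (x e : Euc n) (a ε s : ℝ) : Euc n → ℝ :=
  zonalQuadratic x e (a + ε) (4 * n * ε / s) (4 * ε / s ^ 2)

lemma tangentBarrier_self (x e : Euc n) (a ε s : ℝ) : tangentBarrier x e a ε s x = a + ε := by
  simp [tangentBarrier, zonalQuadratic]

lemma tangentBarrier_le_of_mem_sphere {x e y : Euc n} {a ε r s : ℝ} (he : ‖e‖ = 1)
    (hε : 0 ≤ ε) (hs : 0 < s) (hsr : 2 * (n + 1) * s ≤ r) (hy : y ∈ sphere x s) :
    tangentBarrier x e a ε s y ≤ a - ε ∨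
      y ∈ ball (x + r • e) r ∧ tangentBarrier x e a ε s y ≤ a + 8 * (n + 1) * ε := by
  have hys : ‖y - x‖ = s := mem_sphere_iff_norm.mp hy
  set ω := ⟪e, y - x⟫ / s
  have hw : ⟪e, y - x⟫ = ω * s := (div_mul_cancel₀ _ hs.ne').symm
  have hω : |ω| ≤ 1 := by
    rw [abs_div, abs_of_pos hs, div_le_one hs, ← hys, ← one_mul ‖y - x‖, ← he]
    exact abs_real_inner_le_norm e (y - x)
  obtain ⟨hω₁, hω₂⟩ := abs_le.mp hω
  have hval : tangentBarrier x e a ε s y = a + ε * (4 * n * ω * (ω + 1) - 3) := by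
    rw [tangentBarrier, zonalQuadratic, hw, hys]
    field_simp
    ring
  have hn : (0 : ℝ) ≤ n := n.cast_nonneg
  rw [hval]
  rcases le_or_gt (4 * (n + 1) * ω) 1 with hlow | hhigh
  · have hpoly : 4 * n * ω * (ω + 1) ≤ 2 := by
      rcases le_or_gt ω 0 with hω₀ | hω₀
      · nlinarith [mul_nonpos_of_nonpos_of_nonneg hω₀ (by linarith : 0 ≤ ω + 1)]
      · nlinarith [mul_le_mul_of_nonneg_left (by linarith : ω + 1 ≤ 2)
          (by positivity : 0 ≤ n * ω)]
    left
    nlinarith [mul_le_mul_of_nonneg_left hpoly hε]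
  · have hω₀ : 0 < ω := by nlinarith
    have hpoly : 4 * n * ω * (ω + 1) - 3 ≤ 8 * (n + 1) := by
      nlinarith [mul_le_mul_of_nonneg_left (by nlinarith : ω * (ω + 1) ≤ 2) hn]
    right
    refine ⟨(mem_ball_add_smul_iff he (by nlinarith)).mpr ?_,
      by nlinarith [mul_le_mul_of_nonneg_left hpoly hε]⟩
    rw [hw, hys]
    have : s < 2 * r * ω := by nlinarith [mul_le_mul_of_nonneg_right hsr hω₀.le]
    nlinarith

theorem SuperharmOn.liminf_nhdsWithin_ball_add_smul_le {u : Euc n → EReal} {W : Set (Euc n)}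
    (hu : SuperharmOn u W) {x e : Euc n} (hx : x ∈ W) (he : ‖e‖ = 1) {r : ℝ} (hr : 0 < r) :
    liminf u (𝓝[ball (x + r • e) r] x) ≤ u x := by
  obtain ⟨hW, hlsc, hbot, -, hcmp⟩ := hu
  by_contra! hlt
  obtain ⟨a, ha⟩ : ∃ a : ℝ, u x = a :=
    ⟨(u x).toReal, (EReal.coe_toReal hlt.ne_top (hbot x hx)).symm⟩
  obtain ⟨c, hac, hc⟩ := EReal.lt_iff_exists_real_btwn.mp hlt
  rw [ha, EReal.coe_lt_coe_iff] at hac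
  set ε := (c - a) / (8 * (n + 1))
  have hε : 0 < ε := div_pos (sub_pos.mpr hac) (by positivity)
  have hεc : a + 8 * (n + 1) * ε = c := by
    simp only [ε]
    field_simp
    ring
  have hlow : ∀ᶠ y in 𝓝 x, ((a - ε : ℝ) : EReal) < u y := by
    rw [← hW.nhdsWithin_eq hx]
    exact hlsc x hx _ (show ((a - ε : ℝ) : EReal) < u x by
      rw [ha, EReal.coe_lt_coe_iff]; linarith)
  obtain ⟨ρ, hρ, hnear⟩ := Metric.eventually_nhds_iff_ball.mp <| (hW.eventually_mem hx).and <|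
    hlow.and <| eventually_nhdsWithin_iff.mp (eventually_lt_of_lt_liminf hc)
  set s := min (ρ / 2) (r / (2 * (n + 1)))
  have hs : 0 < s := lt_min (half_pos hρ) (by positivity)
  have hsρ : closedBall x s ⊆ ball x ρ := closedBall_subset_ball (by
    linarith [min_le_left (ρ / 2) (r / (2 * (n + 1)))])
  have hsr : 2 * (n + 1) * s ≤ r := by
    have := min_le_right (ρ / 2) (r / (2 * (n + 1)))
    rw [le_div_iff₀ (by positivity)] at this
    linarith
  have hbd : ∀ y ∈ sphere x s, (tangentBarrier x e a ε s y : EReal) ≤ u y := by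
    intro y hy
    obtain ⟨-, hlow, hhigh⟩ := hnear y (hsρ (sphere_subset_closedBall hy))
    rcases tangentBarrier_le_of_mem_sphere he hε.le hs hsr hy with hle | ⟨hball, hle⟩
    · exact (EReal.coe_le_coe_iff.mpr hle).trans hlow.le
    · exact (EReal.coe_le_coe_iff.mpr (hle.trans_eq hεc)).trans (hhigh hball).le
  have hcenter := hcmp x s hs (fun y hy => (hnear y (hsρ hy)).1) (tangentBarrier x e a ε s)
    (contDiff_zonalQuadratic _ _ _ _ _).continuous.continuousOn
    (harmOn_zonalQuadratic he _ _ _ isOpen_ball) hbd x (mem_ball_self hs)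
  rw [tangentBarrier_self, ha, EReal.coe_le_coe_iff] at hcenter
  linarith

theorem not_eucThinAt_of_ball_add_smul_subset {A : Set (Euc n)} {x e : Euc n} {r : ℝ}
    (he : ‖e‖ = 1) (hr : 0 < r) (hA : ball (x + r • e) r ⊆ A) : ¬ EucThinAt A x := by
  have hA' : ball (x + r • e) r ⊆ A \ {x} := fun y hy =>
    ⟨hA hy, fun hyx => self_notMem_ball_add_smul he hr.le (hyx ▸ hy)⟩
  rintro (hcl | ⟨W, -, hxW, u, hu, hlt⟩)
  · exact hcl (closure_mono hA' (self_mem_closure_ball_add_smul he hr))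
  · exact (hu.liminf_nhdsWithin_ball_add_smul_le hxW he hr).not_gt
      (hlt.trans_le (liminf_le_liminf_of_le (nhdsWithin_mono x hA')))

end Barrier

section Boundary

variable {n : ℕ} {X U : Set (Euc n)} {x : Euc n}

lemma IsSmoothClosedHypersurfaceIn.exists_definingFunction
    (hX : IsSmoothClosedHypersurfaceIn X U) (hx : x ∈ closure X) (hxU : x ∈ U) :
    ∃ f : Euc n → ℝ, ContDiff ℝ 2 f ∧ f x = 0 ∧ fderiv ℝ f x ≠ 0 ∧
      ∀ᶠ y in 𝓝 x, 0 < f y → y ∈ U \ X := by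
  obtain ⟨-, hcl, hloc⟩ := hX
  have hxX : x ∈ X := hcl ⟨hx, hxU⟩
  obtain ⟨V, f, hV, hxV, hVU, hf, hiff, hgrad⟩ := hloc x hxX
  refine ⟨f, hf.of_le (WithTop.coe_le_coe.mpr le_top), (hiff x hxV).mp hxX, hgrad x hxV, ?_⟩
  filter_upwards [hV.mem_nhds hxV] with y hy hfy
  exact ⟨hVU hy, fun hyX => hfy.ne' ((hiff y hy).mp hyX)⟩

lemma IsSmoothlyBorderedDomainIn.exists_definingFunction (hX : IsSmoothlyBorderedDomainIn X U)
    (hx : x ∈ frontier X) (hxU : x ∈ U) :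
    ∃ f : Euc n → ℝ, ContDiff ℝ 2 f ∧ f x = 0 ∧ fderiv ℝ f x ≠ 0 ∧
      ∀ᶠ y in 𝓝 x, 0 < f y → y ∈ U \ X := by
  obtain ⟨-, hcl, -, -, hloc⟩ := hX
  obtain ⟨V, f, hV, hxV, hVU, hf, hiff, hgrad⟩ := hloc x ⟨hx, hxU⟩
  have hle : f x ≤ 0 := (hiff x hxV).mp (hcl ⟨frontier_subset_closure hx, hxU⟩)
  have hge : 0 ≤ f x := by
    have hxc : x ∈ closure (V ∩ Xᶜ) :=
      hV.inter_closure ⟨hxV, by rw [closure_compl]; exact hx.2⟩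
    refine closure_minimal (fun y hy => ?_) (isClosed_le continuous_const hf.continuous) hxc
    exact le_of_lt (not_le.mp fun h => hy.2 ((hiff y hy.1).mpr h))
  refine ⟨f, hf.of_le (WithTop.coe_le_coe.mpr le_top), le_antisymm hle hge, hgrad x hxV, ?_⟩
  filter_upwards [hV.mem_nhds hxV] with y hy hfy
  exact ⟨hVU hy, fun hyX => hfy.not_ge ((hiff y hy).mp hyX)⟩

end Boundary

theorem complement_not_thin_at_boundary_general
    (n : ℕ) (U X : Set (Euc n))
    (hX : IsSmoothClosedHypersurfaceIn X U ∨ IsSmoothlyBorderedDomainIn X U)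
    (x : Euc n) (hx : x ∈ frontier X) (hxU : x ∈ U) :
    ¬ EucThinAt (U \ X) x := by
  obtain ⟨f, hf, hfx, hf'x, hpos⟩ := hX.elim
    (·.exists_definingFunction (frontier_subset_closure hx) hxU)
    (·.exists_definingFunction hx hxU)
  obtain ⟨e, r, hr, he, hball⟩ :=
    exists_ball_add_smul_subset_of_fderiv_ne_zero hf hfx hf'x hpos
  exact not_eucThinAt_of_ball_add_smul_subset he hr hball

/-- If `X` is a smooth closed hypersurface or a smoothly bordered domain
in an open set `U ⊆ ℝⁿ` and `x ∈ ∂X`, then `U \ X` is not thin at `x`. -/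
theorem complement_not_thin_at_boundary
    (n : ℕ) (U X : Set (Euc n)) (hUo : IsOpen U)
    (hX : IsSmoothClosedHypersurfaceIn X U ∨ IsSmoothlyBorderedDomainIn X U)
    (x : Euc n) (hx : x ∈ frontier X) (hxU : x ∈ U) :
    ¬ EucThinAt (U \ X) x :=
  complement_not_thin_at_boundary_general n U X hX x hx hxU

end
end

section
/- Let U ⊆ ℝⁿ, n > 1, be a strictly upper domain with projection U′ = π(U) ⊆ ℝ^{n−1}, and define L(p′) = inf{x_n : (p′, x_n) ∈ U} for p′ ∈ U′. Then the function L : U′ → [−∞, +∞) is continuous. -/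
open Metric Set Filter Topology MeasureTheory
open scoped NNReal ENNReal

noncomputable section

/-- The point `(p, t) ∈ ℝᵐ × ℝ = ℝ^{m+1}`. -/
def vmk {m : ℕ} (p : Euc m) (t : ℝ) : Euc (m+1) :=
  (EuclideanSpace.equiv (Fin (m+1)) ℝ).symm (Fin.snoc (EuclideanSpace.equiv (Fin m) ℝ p) t)

/-- The projection `ℝ^{m+1} = ℝᵐ × ℝ → ℝᵐ`. -/
def vproj {m : ℕ} (x : Euc (m+1)) : Euc m :=
  (EuclideanSpace.equiv (Fin m) ℝ).symm (fun i => EuclideanSpace.equiv (Fin (m+1)) ℝ x i.castSucc)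

/-- The last ("vertical") coordinate of a point of `ℝ^{m+1} = ℝᵐ × ℝ`. -/
def vlast {m : ℕ} (x : Euc (m+1)) : ℝ :=
  EuclideanSpace.equiv (Fin (m+1)) ℝ x (Fin.last m)

/-- `U ⊆ ℝ^{m+1}` is an upper domain: together with each of its points it contains every
point vertically above it. -/
def IsUpperDomain {m : ℕ} (U : Set (Euc (m+1))) : Prop :=
  IsOpen U ∧ IsConnected U ∧
    ∀ x ∈ U, ∀ y : ℝ, vlast x < y → vmk (vproj x) y ∈ U

/-- `U` is a strictly upper domain: moreover, above every boundary point all points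
belong to `U`. -/
def IsStrictUpperDomain {m : ℕ} (U : Set (Euc (m+1))) : Prop :=
  IsUpperDomain U ∧ ∀ x ∈ frontier U, ∀ y : ℝ, vlast x < y → vmk (vproj x) y ∈ U

/-- The lower boundary function `L(p') = inf {x_n : (p', x_n) ∈ U} ∈ [-∞, +∞)` of an
upper domain. -/
def lowerFn {m : ℕ} (U : Set (Euc (m+1))) (p : Euc m) : EReal :=
  sInf ((fun t : ℝ => (t : EReal)) '' {t : ℝ | vmk p t ∈ U})

lemma vproj_vmk {m : ℕ} (p : Euc m) (t : ℝ) : vproj (vmk p t) = p := by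
  ext i
  simp [vproj, vmk, Fin.snoc_castSucc]

lemma vlast_vmk {m : ℕ} (p : Euc m) (t : ℝ) : vlast (vmk p t) = t := by
  simp [vlast, vmk, Fin.snoc_last]

lemma continuous_vmk {m : ℕ} (t : ℝ) : Continuous fun p : Euc m => vmk p t := by
  unfold vmk
  refine (EuclideanSpace.equiv (Fin (m+1)) ℝ).symm.continuous.comp ?_
  refine continuous_pi fun i => ?_
  refine Fin.lastCases ?_ (fun j => ?_) i
  · simp only [Fin.snoc_last]; exact continuous_const
  · simp only [Fin.snoc_castSucc]
    exact (continuous_apply j).comp (EuclideanSpace.equiv (Fin m) ℝ).continuous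

/-- Monotone-in-the-last-coordinate membership for upper domains. -/
lemma upper_mem {m : ℕ} {U : Set (Euc (m+1))} (hU : IsUpperDomain U)
    {p : Euc m} {s t : ℝ} (hs : vmk p s ∈ U) (hst : s < t) : vmk p t ∈ U := by
  have := hU.2.2 (vmk p s) hs t (by rwa [vlast_vmk])
  rwa [vproj_vmk] at this

theorem strict_upper_domain_lowerFn_continuous'
    (m : ℕ) (U : Set (Euc (m+1))) (hU : IsStrictUpperDomain U) :
    ContinuousOn (lowerFn U) (vproj '' U) := by
  intro p hp
  rw [ContinuousWithinAt, tendsto_order]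
  constructor
  · -- lower semicontinuity
    intro b hb
    obtain ⟨c, hbc, hcL⟩ := EReal.lt_iff_exists_real_btwn.1 hb
    -- vmk p c ∉ closure U
    have hnotcl : vmk p c ∉ closure U := by
      intro hcl
      by_cases hmem : vmk p c ∈ U
      · exact absurd (sInf_le (Set.mem_image_of_mem (fun t : ℝ => (t : EReal)) (show c ∈ {t : ℝ | vmk p t ∈ U} from hmem))) (not_le.2 hcL)
      · have hfr : vmk p c ∈ frontier U := by
          rw [frontier, hU.1.1.interior_eq]
          exact ⟨hcl, hmem⟩
        obtain ⟨y, hcy, hyL⟩ := EReal.lt_iff_exists_real_btwn.1 hcL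
        have : vmk p y ∈ U := by
          have := hU.2 _ hfr y (by rw [vlast_vmk]; exact EReal.coe_lt_coe_iff.1 hcy)
          rwa [vproj_vmk] at this
        exact absurd (sInf_le (Set.mem_image_of_mem (fun t : ℝ => (t : EReal)) (show y ∈ {t : ℝ | vmk p t ∈ U} from this))) (not_le.2 hyL)
    have hopen : IsOpen {q : Euc m | vmk q c ∉ closure U} := by
      have : IsOpen ((fun q : Euc m => vmk q c) ⁻¹' (closure U)ᶜ) :=
        isClosed_closure.isOpen_compl.preimage (continuous_vmk c)
      exact this
    have hev : ∀ᶠ q in 𝓝[vproj '' U] p, vmk q c ∉ closure U :=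
      Filter.Eventually.filter_mono nhdsWithin_le_nhds (hopen.mem_nhds hnotcl)
    refine hev.mono fun q hq => lt_of_lt_of_le hbc ?_
    refine le_sInf ?_
    rintro x ⟨t, ht, rfl⟩
    rw [EReal.coe_le_coe_iff]
    by_contra hlt
    push_neg at hlt
    exact hq (subset_closure (upper_mem hU.1 ht hlt))
  · -- upper semicontinuity
    intro b hb
    obtain ⟨x, ⟨t, ht, rfl⟩, hxb⟩ := sInf_lt_iff.1 hb
    have hopen : IsOpen {q : Euc m | vmk q t ∈ U} := hU.1.1.preimage (continuous_vmk t)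
    have hev : ∀ᶠ q in 𝓝[vproj '' U] p, vmk q t ∈ U :=
      Filter.Eventually.filter_mono nhdsWithin_le_nhds (hopen.mem_nhds ht)
    exact hev.mono fun q hq => lt_of_le_of_lt (sInf_le (Set.mem_image_of_mem (fun s : ℝ => (s : EReal)) (show t ∈ {s : ℝ | vmk q s ∈ U} from hq))) hxb

/-- For a strictly upper domain `U` with projection `U' = π(U)`, the
function `L(p') = inf {x_n : (p', x_n) ∈ U}` is continuous on `U'` (with values in
`[-∞, +∞)` with the order topology). -/
theorem strict_upper_domain_lowerFn_continuous
    (m : ℕ) (hm : 1 ≤ m) (U : Set (Euc (m+1))) (hU : IsStrictUpperDomain U) :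
    ContinuousOn (lowerFn U) (vproj '' U) :=
  strict_upper_domain_lowerFn_continuous' m U hU

end
end
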